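/- arXiv:2408.09762 — 3 statements merged into one kernel-verified Lean document; each statement's English description precedes it below -/
import Mathlib

section
/- Let w, w* ∈ ℝ^d and for each k = 0,...,K-1 let w_k ∈ ℝ^d with w_0 = w. Suppose for each k, ḡ_k = ∑_n γ_n ∇f_n(w_k) where each f_n is differentiable and μ-strongly convex and γ_n ≥ 0 sum to 1, and η_k > 0. Then -2⟨w - w*, ∑_k η_k ḡ_k⟩ ≤ ∑_k (1/K + μη_k)‖w - w_k‖² + K ∑_k η_k² ∑_n γ_n ‖∇f_n(w_k)‖² + 2 ∑_k η_k ∑_n γ_n (f_n(w*) - f_n(w_k)) - (μ/2) ∑_k η_k ‖w - w*‖². -/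
open scoped RealInnerProductSpace
open Finset

set_option maxHeartbeats 1000000 in
theorem lemma1_inner_bound
    (d K : ℕ) (hK : 1 ≤ K) (ι : Type*) [Fintype ι]
    (f : ι → EuclideanSpace ℝ (Fin d) → ℝ) (μ : ℝ) (hμ : 0 < μ)
    (γ : ι → ℝ) (hγ : ∀ n, 0 ≤ γ n) (hγsum : ∑ n, γ n = 1)
    (hdiff : ∀ n x, DifferentiableAt ℝ (f n) x)
    (hsc : ∀ n x y, f n x ≥ f n y + ⟪gradient (f n) y, x - y⟫
      + μ / 2 * ‖x - y‖ ^ 2)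
    (η : ℕ → ℝ) (hη : ∀ k, 0 < η k)
    (w wstar : EuclideanSpace ℝ (Fin d))
    (wk : ℕ → EuclideanSpace ℝ (Fin d)) (hw0 : wk 0 = w) :
    -2 * ⟪w - wstar, ∑ k ∈ range K, η k • ∑ n, γ n • gradient (f n) (wk k)⟫ ≤
      (∑ k ∈ range K, (1 / (K : ℝ) + μ * η k) * ‖w - wk k‖ ^ 2)
      + (K : ℝ) * ∑ k ∈ range K, (η k) ^ 2 * ∑ n, γ n * ‖gradient (f n) (wk k)‖ ^ 2
      + 2 * ∑ k ∈ range K, η k * ∑ n, γ n * (f n wstar - f n (wk k))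
      - μ / 2 * ∑ k ∈ range K, η k * ‖w - wstar‖ ^ 2 := by
  have hKpos : (0:ℝ) < K := by exact_mod_cast Nat.lt_of_lt_of_le Nat.zero_lt_one hK
  have hL : ⟪w - wstar, ∑ k ∈ range K, η k • ∑ n, γ n • gradient (f n) (wk k)⟫
      = ∑ k ∈ range K, η k * ⟪w - wstar, ∑ n, γ n • gradient (f n) (wk k)⟫ := by
    rw [inner_sum]
    exact Finset.sum_congr rfl fun k _ => real_inner_smul_right _ _ _
  rw [hL, Finset.mul_sum, Finset.mul_sum, Finset.mul_sum, Finset.mul_sum,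
    ← Finset.sum_add_distrib, ← Finset.sum_add_distrib, ← Finset.sum_sub_distrib]
  refine Finset.sum_le_sum fun k _ => ?_
  set x := wk k with hx
  set g : EuclideanSpace ℝ (Fin d) := ∑ n, γ n • gradient (f n) x with hgdef
  set S : ℝ := ∑ n, γ n * ‖gradient (f n) x‖ ^ 2 with hSdef
  set T : ℝ := ∑ n, γ n * (f n wstar - f n x) with hTdef
  set A : ℝ := ‖w - x‖ with hA
  set B : ℝ := ‖wstar - x‖ with hB
  set C : ℝ := ‖w - wstar‖ with hC
  set G : ℝ := ‖g‖ with hG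
  -- Jensen / Cauchy-Schwarz : ‖g‖² ≤ S
  have hG2 : G ^ 2 ≤ S := by
    have h1 : G ≤ ∑ n, γ n * ‖gradient (f n) x‖ := by
      refine (norm_sum_le _ _).trans_eq ?_
      simp [norm_smul, abs_of_nonneg (hγ _)]
    have h2 : (∑ n, γ n * ‖gradient (f n) x‖) ^ 2 ≤ (∑ n, γ n) * S := by
      have hcs := Finset.sum_mul_sq_le_sq_mul_sq Finset.univ
        (fun n => Real.sqrt (γ n)) (fun n => Real.sqrt (γ n) * ‖gradient (f n) x‖)
      calc (∑ n, γ n * ‖gradient (f n) x‖) ^ 2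
          = (∑ n, Real.sqrt (γ n) * (Real.sqrt (γ n) * ‖gradient (f n) x‖)) ^ 2 := by
            congr 1; refine Finset.sum_congr rfl fun n _ => ?_
            rw [← mul_assoc, Real.mul_self_sqrt (hγ n)]
        _ ≤ (∑ n, Real.sqrt (γ n) ^ 2) * ∑ n, (Real.sqrt (γ n) * ‖gradient (f n) x‖) ^ 2 := hcs
        _ = (∑ n, γ n) * S := by
            congr 1
            · exact Finset.sum_congr rfl fun n _ => Real.sq_sqrt (hγ n)
            · refine Finset.sum_congr rfl fun n _ => ?_
              rw [mul_pow, Real.sq_sqrt (hγ n)]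
    calc G ^ 2 ≤ (∑ n, γ n * ‖gradient (f n) x‖) ^ 2 :=
          pow_le_pow_left₀ (norm_nonneg _) h1 2
      _ ≤ (∑ n, γ n) * S := h2
      _ = S := by rw [hγsum, one_mul]
  -- strong convexity bound
  have hQ : -T + μ / 2 * B ^ 2 ≤ ⟪g, x - wstar⟫ := by
    have hge : ⟪g, x - wstar⟫ = ∑ n, γ n * ⟪gradient (f n) x, x - wstar⟫ := by
      rw [hgdef, sum_inner]
      exact Finset.sum_congr rfl fun n _ => real_inner_smul_left _ _ _
    have hstep : ∀ n ∈ Finset.univ (α := ι),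
        γ n * (f n x - f n wstar + μ / 2 * B ^ 2)
          ≤ γ n * ⟪gradient (f n) x, x - wstar⟫ := by
      intro n _
      refine mul_le_mul_of_nonneg_left ?_ (hγ n)
      have h := hsc n wstar x
      have e1 : ⟪gradient (f n) x, wstar - x⟫
          = ⟪gradient (f n) x, wstar⟫ - ⟪gradient (f n) x, x⟫ := inner_sub_right _ _ _
      have e2 : ⟪gradient (f n) x, x - wstar⟫
          = ⟪gradient (f n) x, x⟫ - ⟪gradient (f n) x, wstar⟫ := inner_sub_right _ _ _
      rw [hB]
      linarith
    have hsum := Finset.sum_le_sum hstep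
    have h1 : ∑ n, γ n * (f n x - f n wstar + μ / 2 * B ^ 2)
        = (∑ n, γ n * (f n x - f n wstar)) + (∑ n, γ n) * (μ / 2 * B ^ 2) := by
      rw [Finset.sum_mul, ← Finset.sum_add_distrib]
      exact Finset.sum_congr rfl fun n _ => by ring
    have h2 : ∑ n, γ n * (f n x - f n wstar) = -T := by
      rw [hTdef, ← Finset.sum_neg_distrib]
      exact Finset.sum_congr rfl fun n _ => by ring
    rw [hge]
    calc -T + μ / 2 * B ^ 2
        = ∑ n, γ n * (f n x - f n wstar + μ / 2 * B ^ 2) := by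
          rw [h1, h2, hγsum, one_mul]
      _ ≤ _ := hsum
  have hsplit : ⟪w - wstar, g⟫ = ⟪w - x, g⟫ + ⟪x - wstar, g⟫ := by
    rw [← inner_add_left, sub_add_sub_cancel]
  have hP : -(A * G) ≤ ⟪w - x, g⟫ :=
    neg_le_of_abs_le (abs_real_inner_le_norm _ _)
  have hcomm : ⟪x - wstar, g⟫ = ⟪g, x - wstar⟫ := real_inner_comm _ _
  set P : ℝ := ⟪w - x, g⟫ with hPdef
  set Q : ℝ := ⟪x - wstar, g⟫ with hQdef
  have h5 : C ^ 2 ≤ 2 * A ^ 2 + 2 * B ^ 2 := by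
    have e : w - wstar = (w - x) - (wstar - x) := by abel
    have h1 : ‖(w - x) - (wstar - x)‖ ^ 2
        = A ^ 2 - 2 * ⟪w - x, wstar - x⟫ + B ^ 2 := norm_sub_sq_real _ _
    have h3 : -(A * B) ≤ ⟪w - x, wstar - x⟫ :=
      neg_le_of_abs_le (abs_real_inner_le_norm _ _)
    rw [hC, e, h1]
    nlinarith [sq_nonneg (A - B)]
  -- AM-GM with parameter K
  have hamgm : 2 * η k * (A * G) ≤ (1 / (K:ℝ)) * A ^ 2 + (K:ℝ) * (η k) ^ 2 * G ^ 2 := by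
    have key : (1 / (K:ℝ)) * A ^ 2 + (K:ℝ) * (η k) ^ 2 * G ^ 2 - 2 * η k * (A * G)
        = (1 / (K:ℝ)) * (A - (K:ℝ) * η k * G) ^ 2 := by
      field_simp
      ring
    have hpos : 0 ≤ (1 / (K:ℝ)) * (A - (K:ℝ) * η k * G) ^ 2 :=
      mul_nonneg (by positivity) (sq_nonneg _)
    linarith [key, hpos]
  have e1 : -2 * (η k * ⟪w - wstar, g⟫) = -2 * η k * P - 2 * η k * Q := by
    rw [hsplit]; ring
  have e2 : -2 * η k * P ≤ 2 * η k * (A * G) := by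
    have := mul_le_mul_of_nonneg_left hP (by linarith [hη k] : (0:ℝ) ≤ 2 * η k)
    linarith
  have e3 : -2 * η k * Q ≤ 2 * η k * T - μ * η k * B ^ 2 := by
    have hQ' : -T + μ / 2 * B ^ 2 ≤ Q := by rw [hcomm]; exact hQ
    have := mul_le_mul_of_nonneg_left hQ' (by linarith [hη k] : (0:ℝ) ≤ 2 * η k)
    linarith
  have e4 : (K:ℝ) * (η k) ^ 2 * G ^ 2 ≤ (K:ℝ) * ((η k) ^ 2 * S) := by
    have := mul_le_mul_of_nonneg_left hG2 (by positivity : (0:ℝ) ≤ (K:ℝ) * (η k) ^ 2)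
    linarith
  have e5 : μ / 2 * (η k * C ^ 2) ≤ μ * η k * A ^ 2 + μ * η k * B ^ 2 := by
    have := mul_le_mul_of_nonneg_left h5
      (by nlinarith [hη k, hμ] : (0:ℝ) ≤ μ / 2 * η k)
    linarith
  rw [e1]
  linarith only [e2, e3, e4, e5, hamgm]
end

section
/- Under the hypotheses of Lemma 1 and additionally assuming each f_n has a finite minimum f_n* and step sizes satisfy 0 < η_k < 1/(2LK) with each f_n also L-smooth, the following holds: -∑_k 2η_k(1 - 2LKη_k) ∑_n γ_n (f_n(w_k) - f_n(w*)) ≤ ∑_k 2η_k(1 - 2LKη_k)(LKη_k - 1) ∑_n γ_n (f_n(w) - f_n(w*)) + ∑_k 2LKη_k² ∑_n γ_n (f_n(w*) - f_n*) + ∑_k (1/K - μη_k) ‖w_k - w‖². -/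
open scoped RealInnerProductSpace
open Finset

/-!
Fix a client `n` and a step `k`, and put `c = K η_k`. Strong convexity at `w` together with
`‖c ∇f_n(w) + (w_k - w)‖² ≥ 0` gives
`2c (f_n(w) - f_n(w_k)) ≤ c² ‖∇f_n(w)‖² + (1 - μc) ‖w_k - w‖²`,
and `L`-smoothness with the lower bound `f_n*` (one gradient step from `w`) gives
`‖∇f_n(w)‖² ≤ 2L (f_n(w) - f_n*)`. Multiplying by `1 - 2Lc ∈ [0, 1]` can only shrink the two
remainder terms, which are nonnegative (`μ ≤ L` since both quadratic bounds hold at `w_k`).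
Dividing by `K`, averaging with the weights `γ` and summing over `k` gives the claim.
-/

section

variable {E : Type*} [NormedAddCommGroup E] [InnerProductSpace ℝ E]

theorem norm_sq_le_of_quadratic_majorant {f : E → ℝ} {x g : E} {L m : ℝ} (hL : 0 < L)
    (hup : ∀ y, f y ≤ f x + ⟪g, y - x⟫ + L / 2 * ‖y - x‖ ^ 2) (hm : ∀ y, m ≤ f y) :
    ‖g‖ ^ 2 ≤ 2 * L * (f x - m) := by
  have hdecrease : f (x - L⁻¹ • g) ≤ f x - ‖g‖ ^ 2 / (2 * L) := by
    have h := hup (x - L⁻¹ • g)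
    rw [sub_sub_cancel_left, inner_neg_right, real_inner_smul_right, real_inner_self_eq_norm_sq,
      norm_neg, norm_smul, Real.norm_of_nonneg (inv_nonneg.2 hL.le)] at h
    have e : -(L⁻¹ * ‖g‖ ^ 2) + L / 2 * (L⁻¹ * ‖g‖) ^ 2 = -(‖g‖ ^ 2 / (2 * L)) := by
      field_simp
      ring
    linarith
  exact (div_le_iff₀' (by positivity)).1 (by linarith [hm (x - L⁻¹ • g)])

theorem two_mul_sub_le_of_quadratic_minorant {f : E → ℝ} {x w g : E} {μ c : ℝ} (hc : 0 ≤ c)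
    (hlow : f w + ⟪g, x - w⟫ + μ / 2 * ‖x - w‖ ^ 2 ≤ f x) :
    2 * c * (f w - f x) ≤ c ^ 2 * ‖g‖ ^ 2 + (1 - μ * c) * ‖x - w‖ ^ 2 := by
  have hsq : 0 ≤ ‖c • g + (x - w)‖ ^ 2 := sq_nonneg _
  rw [norm_add_sq_real, real_inner_smul_left, norm_smul, mul_pow, Real.norm_eq_abs,
    sq_abs] at hsq
  nlinarith [mul_le_mul_of_nonneg_left hlow hc]

theorem client_step_bound {f : E → ℝ} {x w z g : E} {μ L c m : ℝ} (hL : 0 < L) (hc : 0 ≤ c)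
    (hLc : 2 * L * c ≤ 1) (hlow : f w + ⟪g, x - w⟫ + μ / 2 * ‖x - w‖ ^ 2 ≤ f x)
    (hup : ∀ y, f y ≤ f w + ⟪g, y - w⟫ + L / 2 * ‖y - w‖ ^ 2) (hm : ∀ y, m ≤ f y) :
    -(2 * c * (1 - 2 * L * c) * (f x - f z)) ≤
      2 * c * (1 - 2 * L * c) * (L * c - 1) * (f w - f z) + 2 * L * c ^ 2 * (f z - m)
        + (1 - μ * c) * ‖x - w‖ ^ 2 := by
  have hgrad := norm_sq_le_of_quadratic_majorant hL hup hm
  have hdescent := two_mul_sub_le_of_quadratic_minorant hc hlow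
  have hgap : 0 ≤ f z - m := sub_nonneg.2 (hm z)
  have hμL : μ * ‖x - w‖ ^ 2 ≤ L * ‖x - w‖ ^ 2 := by linarith [hup x]
  have hdist : 0 ≤ (1 - μ * c) * ‖x - w‖ ^ 2 := by nlinarith [sq_nonneg ‖x - w‖]
  have hraw : -(2 * c * (f x - f z)) ≤
      2 * c * (L * c - 1) * (f w - f z) + 2 * L * c ^ 2 * (f z - m)
        + (1 - μ * c) * ‖x - w‖ ^ 2 := by
    nlinarith [mul_le_mul_of_nonneg_left hgrad (sq_nonneg c)]
  have hLc0 : 0 ≤ 2 * L * c := by positivity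
  nlinarith [mul_le_mul_of_nonneg_left hraw (sub_nonneg.2 hLc),
    mul_nonneg hLc0 (mul_nonneg (by positivity : 0 ≤ 2 * L * c ^ 2) hgap), mul_nonneg hLc0 hdist]

theorem weighted_client_step_bound {ι : Type*} [Fintype ι] {f : ι → E → ℝ} {g : ι → E}
    {γ m : ι → ℝ} {x w z : E} {μ L K η : ℝ} (hγ : ∀ n, 0 ≤ γ n) (hγsum : ∑ n, γ n = 1)
    (hL : 0 < L) (hK : 0 < K) (hη : 0 ≤ η) (hLKη : 2 * L * K * η ≤ 1)
    (hlow : ∀ n, f n w + ⟪g n, x - w⟫ + μ / 2 * ‖x - w‖ ^ 2 ≤ f n x)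
    (hup : ∀ n y, f n y ≤ f n w + ⟪g n, y - w⟫ + L / 2 * ‖y - w‖ ^ 2)
    (hm : ∀ n y, m n ≤ f n y) :
    -(2 * η * (1 - 2 * L * K * η) * ∑ n, γ n * (f n x - f n z)) ≤
      2 * η * (1 - 2 * L * K * η) * (L * K * η - 1) * ∑ n, γ n * (f n w - f n z)
        + 2 * L * K * η ^ 2 * ∑ n, γ n * (f n z - m n)
        + (1 / K - μ * η) * ‖x - w‖ ^ 2 := by
  have hclient : ∀ n, -(2 * η * (1 - 2 * L * K * η) * (f n x - f n z)) ≤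
      2 * η * (1 - 2 * L * K * η) * (L * K * η - 1) * (f n w - f n z)
        + 2 * L * K * η ^ 2 * (f n z - m n) + (1 / K - μ * η) * ‖x - w‖ ^ 2 := by
    intro n
    have h := client_step_bound (z := z) hL (mul_nonneg hK.le hη) (by linarith) (hlow n) (hup n)
      (hm n)
    rw [← mul_le_mul_iff_right₀ hK]
    refine (le_of_eq ?_).trans (h.trans (le_of_eq ?_))
    · ring
    · field_simp
  have hmean : (1 / K - μ * η) * ‖x - w‖ ^ 2 = ∑ n, γ n * ((1 / K - μ * η) * ‖x - w‖ ^ 2) := by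
    rw [← sum_mul, hγsum, one_mul]
  rw [hmean]
  simp only [mul_sum, ← sum_neg_distrib, ← sum_add_distrib]
  exact sum_le_sum fun n _ => by linarith [mul_le_mul_of_nonneg_left (hclient n) (hγ n)]

end

theorem lemma2_bound_general
    (d K : ℕ) (hK : 1 ≤ K) (ι : Type*) [Fintype ι]
    (f : ι → EuclideanSpace ℝ (Fin d) → ℝ) (μ L : ℝ) (hL : 0 < L)
    (γ : ι → ℝ) (hγ : ∀ n, 0 ≤ γ n) (hγsum : ∑ n, γ n = 1)
    (hsc : ∀ n x y, f n x ≥ f n y + ⟪gradient (f n) y, x - y⟫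
      + μ / 2 * ‖x - y‖ ^ 2)
    (hsmooth : ∀ n x y, f n x ≤ f n y + ⟪gradient (f n) y, x - y⟫
      + L / 2 * ‖x - y‖ ^ 2)
    (fstar : ι → ℝ) (hfstar : ∀ n x, fstar n ≤ f n x)
    (η : ℕ → ℝ) (hη : ∀ k, 0 < η k) (hηK : ∀ k, η k < 1 / (2 * L * K))
    (w wstar : EuclideanSpace ℝ (Fin d))
    (wk : ℕ → EuclideanSpace ℝ (Fin d)) :
    -(∑ k ∈ range K, 2 * η k * (1 - 2 * L * K * η k)
        * ∑ n, γ n * (f n (wk k) - f n wstar)) ≤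
      (∑ k ∈ range K, 2 * η k * (1 - 2 * L * K * η k) * (L * K * η k - 1)
        * ∑ n, γ n * (f n w - f n wstar))
      + (∑ k ∈ range K, 2 * L * K * (η k) ^ 2
        * ∑ n, γ n * (f n wstar - fstar n))
      + (∑ k ∈ range K, (1 / (K : ℝ) - μ * η k) * ‖wk k - w‖ ^ 2) := by
  have hKpos : (0 : ℝ) < K := by exact_mod_cast hK
  have hstep : ∀ k, 2 * L * K * η k ≤ 1 := fun k => by
    have := hηK k
    rw [lt_div_iff₀ (by positivity), mul_comm] at this
    exact this.le
  rw [← sum_neg_distrib, ← sum_add_distrib, ← sum_add_distrib]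
  exact sum_le_sum fun k _ => weighted_client_step_bound hγ hγsum hL hKpos (hη k).le (hstep k)
    (fun n => hsc n (wk k) w) (fun n y => hsmooth n y w) hfstar

theorem lemma2_bound
    (d K : ℕ) (hK : 1 ≤ K) (ι : Type*) [Fintype ι]
    (f : ι → EuclideanSpace ℝ (Fin d) → ℝ) (μ L : ℝ) (hμ : 0 < μ) (hL : 0 < L)
    (γ : ι → ℝ) (hγ : ∀ n, 0 ≤ γ n) (hγsum : ∑ n, γ n = 1)
    (hdiff : ∀ n x, DifferentiableAt ℝ (f n) x)
    (hsc : ∀ n x y, f n x ≥ f n y + ⟪gradient (f n) y, x - y⟫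
      + μ / 2 * ‖x - y‖ ^ 2)
    (hsmooth : ∀ n x y, f n x ≤ f n y + ⟪gradient (f n) y, x - y⟫
      + L / 2 * ‖x - y‖ ^ 2)
    (fstar : ι → ℝ) (hfstar : ∀ n x, fstar n ≤ f n x)
    (η : ℕ → ℝ) (hη : ∀ k, 0 < η k) (hηK : ∀ k, η k < 1 / (2 * L * K))
    (w wstar : EuclideanSpace ℝ (Fin d))
    (wk : ℕ → EuclideanSpace ℝ (Fin d)) (hw0 : wk 0 = w) :
    -(∑ k ∈ range K, 2 * η k * (1 - 2 * L * K * η k)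
        * ∑ n, γ n * (f n (wk k) - f n wstar)) ≤
      (∑ k ∈ range K, 2 * η k * (1 - 2 * L * K * η k) * (L * K * η k - 1)
        * ∑ n, γ n * (f n w - f n wstar))
      + (∑ k ∈ range K, 2 * L * K * (η k) ^ 2
        * ∑ n, γ n * (f n wstar - fstar n))
      + (∑ k ∈ range K, (1 / (K : ℝ) - μ * η k) * ‖wk k - w‖ ^ 2) :=
  lemma2_bound_general d K hK ι f μ L hL γ hγ hγsum hsc hsmooth fstar hfstar η hη hηK w wstar wk
end

section
/- Let F : ℝ^d → ℝ be differentiable and L-smooth (satisfying the quadratic upper bound), and suppose in round t the update is w^{t+1} = w^t - ∑_{k=0}^{K-1} η_k g_k with η_k ≤ 1/(LK), where for each k, ⟨∇F(w^t), g_k⟩ ≥ (1/4)‖∇F(w^t)‖² + (1/2)‖G_m‖² - (θ² + σ²/2) and ‖g_k‖² ≤ θ² + ‖ḡ_k‖² with ‖ḡ_k‖² = ‖G_m‖² (here G_m = ∇F_m(w^t) is the cluster gradient). Then (1/4)(∑_k η_k) ‖∇F(w^t)‖² ≤ F(w^t) - F(w^{t+1}) + ((LK/2)∑_k η_k² + ∑_k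 η_k) θ² + ∑_k ((LK/2)η_k² - (1/2)η_k) ‖G_m‖² + (1/2)(∑_k η_k) σ². -/
open scoped RealInnerProductSpace
open Finset

theorem per_round_descent_inequality
    (d K : ℕ) (hK : 1 ≤ K)
    (F : EuclideanSpace ℝ (Fin d) → ℝ) (L : ℝ) (hL : 0 < L)
    (hdiff : ∀ x, DifferentiableAt ℝ F x)
    (hsmooth : ∀ w1 w2, F w1 ≤ F w2 + ⟪gradient F w2, w1 - w2⟫
      + L / 2 * ‖w1 - w2‖ ^ 2)
    (η : ℕ → ℝ) (hηpos : ∀ k, 0 < η k) (hη : ∀ k, η k ≤ 1 / (L * K))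
    (θ σ : ℝ) (hθ : 0 ≤ θ) (hσ : 0 ≤ σ)
    (Gm : EuclideanSpace ℝ (Fin d))
    (g gbar : ℕ → EuclideanSpace ℝ (Fin d))
    (wt wt1 : EuclideanSpace ℝ (Fin d))
    (hupdate : wt1 = wt - ∑ k ∈ range K, η k • g k)
    (hlower : ∀ k, ⟪gradient F wt, g k⟫ ≥
      1 / 4 * ‖gradient F wt‖ ^ 2 + 1 / 2 * ‖Gm‖ ^ 2 - (θ ^ 2 + σ ^ 2 / 2))
    (hgbar : ∀ k, ‖gbar k‖ ^ 2 = ‖Gm‖ ^ 2)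
    (hgbound : ∀ k, ‖g k‖ ^ 2 ≤ θ ^ 2 + ‖gbar k‖ ^ 2) :
    1 / 4 * (∑ k ∈ range K, η k) * ‖gradient F wt‖ ^ 2 ≤
      F wt - F wt1
      + (L * K / 2 * (∑ k ∈ range K, (η k) ^ 2) + ∑ k ∈ range K, η k) * θ ^ 2
      + (∑ k ∈ range K, (L * K / 2 * (η k) ^ 2 - 1 / 2 * η k)) * ‖Gm‖ ^ 2
      + 1 / 2 * (∑ k ∈ range K, η k) * σ ^ 2 := by
  set G := gradient F wt with hG
  set v := ∑ k ∈ range K, η k • g k with hv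
  set A := ∑ k ∈ range K, η k with hA
  set B := ∑ k ∈ range K, (η k) ^ 2 with hB
  -- smoothness
  have hsm := hsmooth wt1 wt
  rw [hupdate] at hsm
  have hsub : wt - v - wt = -v := by abel
  rw [hsub] at hsm
  -- inner product expansion
  have hinner : ⟪G, -v⟫ = -(∑ k ∈ range K, η k * ⟪G, g k⟫) := by
    rw [inner_neg_right, hv, inner_sum]
    congr 1
    refine Finset.sum_congr rfl fun k _ => ?_
    rw [real_inner_smul_right]
  -- lower bound on sum of inner products
  have hinnersum : ∑ k ∈ range K, η k * ⟪G, g k⟫ ≥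
      A * (1 / 4 * ‖G‖ ^ 2 + 1 / 2 * ‖Gm‖ ^ 2 - (θ ^ 2 + σ ^ 2 / 2)) := by
    rw [hA, Finset.sum_mul]
    refine Finset.sum_le_sum fun k _ => ?_
    nlinarith [mul_le_mul_of_nonneg_right (hlower k) (hηpos k).le]
  -- norm bound
  have hvnorm : ‖v‖ ^ 2 ≤ K * B * (θ ^ 2 + ‖Gm‖ ^ 2) := by
    have h1 : ‖v‖ ≤ ∑ k ∈ range K, η k * ‖g k‖ := by
      refine (norm_sum_le _ _).trans_eq ?_
      refine Finset.sum_congr rfl fun k _ => ?_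
      rw [norm_smul, Real.norm_eq_abs, abs_of_pos (hηpos k)]
    have h2 : ‖v‖ ^ 2 ≤ (∑ k ∈ range K, η k * ‖g k‖) ^ 2 := by
      have hs : (0:ℝ) ≤ ∑ k ∈ range K, η k * ‖g k‖ :=
        Finset.sum_nonneg fun k _ => mul_nonneg (hηpos k).le (norm_nonneg _)
      exact pow_le_pow_left₀ (norm_nonneg _) h1 2
    have h3 : (∑ k ∈ range K, η k * ‖g k‖) ^ 2 ≤
        (#(range K) : ℝ) * ∑ k ∈ range K, (η k * ‖g k‖) ^ 2 :=
      sq_sum_le_card_mul_sum_sq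
    have h4 : ∑ k ∈ range K, (η k * ‖g k‖) ^ 2 ≤ B * (θ ^ 2 + ‖Gm‖ ^ 2) := by
      rw [hB, Finset.sum_mul]
      refine Finset.sum_le_sum fun k _ => ?_
      rw [mul_pow]
      refine mul_le_mul_of_nonneg_left ?_ (by positivity)
      calc ‖g k‖ ^ 2 ≤ θ ^ 2 + ‖gbar k‖ ^ 2 := hgbound k
        _ = θ ^ 2 + ‖Gm‖ ^ 2 := by rw [hgbar k]
    calc ‖v‖ ^ 2 ≤ (∑ k ∈ range K, η k * ‖g k‖) ^ 2 := h2
      _ ≤ (#(range K) : ℝ) * ∑ k ∈ range K, (η k * ‖g k‖) ^ 2 := h3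
      _ ≤ (K : ℝ) * (B * (θ ^ 2 + ‖Gm‖ ^ 2)) := by
          rw [Finset.card_range]
          exact mul_le_mul_of_nonneg_left h4 (Nat.cast_nonneg K)
      _ = K * B * (θ ^ 2 + ‖Gm‖ ^ 2) := by ring
  -- sum on RHS
  have hsum3 : ∑ k ∈ range K, (L * K / 2 * (η k) ^ 2 - 1 / 2 * η k)
      = L * K / 2 * B - 1 / 2 * A := by
    rw [Finset.sum_sub_distrib, ← Finset.mul_sum, ← Finset.mul_sum, hA, hB]
  rw [hsum3]
  have hL2 : L / 2 * ‖-v‖ ^ 2 ≤ L / 2 * (K * B * (θ ^ 2 + ‖Gm‖ ^ 2)) := by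
    rw [norm_neg]
    exact mul_le_mul_of_nonneg_left hvnorm (by positivity)
  rw [hinner, ← hupdate] at hsm
  nlinarith [hsm, hinnersum, hL2]
end
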